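/- Let E be a finite-dimensional Euclidean space and V, W ⊆ E be subspaces. Then the angle between the orthogonal complements equals the angle between the subspaces: σ(V^⊥, W^⊥) = σ(V, W). -/

import Mathlib

open scoped InnerProductSpace

/-- The volume of a tuple of vectors: the square root of the determinant of
its Gram matrix. -/
noncomputable def tupleVol {E : Type*} [NormedAddCommGroup E] [InnerProductSpace ℝ E]
    {k : ℕ} (f : Fin k → E) : ℝ :=
  Real.sqrt (Matrix.det (Matrix.of fun i j => (inner ℝ (f i) (f j) : ℝ)))

/-- The angle `σ(V,W)` between two subspaces of a Euclidean space:
`vol(v w)/(vol(v)·vol(w))` for bases `v` of `V ⊓ (V ⊓ W)ᗮ` and `w` of `W ⊓ (V ⊓ W)ᗮ`,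
and `1` if `V ≤ W` or `W ≤ V`. -/
noncomputable def subAngle {E : Type*} [NormedAddCommGroup E] [InnerProductSpace ℝ E]
    [FiniteDimensional ℝ E] (V W : Submodule ℝ E) : ℝ :=
  letI := Classical.propDecidable (V ≤ W ∨ W ≤ V)
  if V ≤ W ∨ W ≤ V then 1
  else
    let v : Fin (Module.finrank ℝ ↥(V ⊓ (V ⊓ W)ᗮ)) → E :=
      fun i => ((Module.finBasis ℝ ↥(V ⊓ (V ⊓ W)ᗮ)) i : E)
    let w : Fin (Module.finrank ℝ ↥(W ⊓ (V ⊓ W)ᗮ)) → E :=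
      fun j => ((Module.finBasis ℝ ↥(W ⊓ (V ⊓ W)ᗮ)) j : E)
    tupleVol (Fin.append v w) / (tupleVol v * tupleVol w)

/-!
Write `A = V ⊓ (V ⊓ W)ᗮ`, `B = W ⊓ (V ⊓ W)ᗮ` and `A' = Vᗮ ⊓ (V ⊔ W)`, `B' = Wᗮ ⊓ (V ⊔ W)`; since
`(Vᗮ ⊓ Wᗮ)ᗮ = V ⊔ W`, the last two are the spaces entering `σ(Vᗮ, Wᗮ)`. All four lie in
`F = (V ⊔ W) ⊓ (V ⊓ W)ᗮ`, where `A ⊕ A'` and `B' ⊕ B` are orthogonal decompositions of `F`, so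
`dim A' = dim B` and `dim B' = dim A`. For orthonormal bases `a, b, a', b'` the angle is the square
root of a Gram determinant, and expanding in the orthonormal bases `(a, a')` and `(b', b)` of `F`
gives `σ(V, W)² = det ⟪a' j, b i⟫²` and `σ(Vᗮ, Wᗮ)² = det ⟪b j, a' i⟫²`, the determinants of a
matrix and of its transpose.
-/

open Module Matrix Submodule

section Gram

variable {E : Type*} [NormedAddCommGroup E] [InnerProductSpace ℝ E]

lemma gram_sum_smul {ι κ : Type*} [Fintype κ] (P : Matrix ι κ ℝ) (u : κ → E) :
    gram ℝ (fun i => ∑ j, P i j • u j) = P * gram ℝ u * Pᵀ := by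
  ext i j
  simp only [gram_apply, sum_inner, inner_sum, real_inner_smul_left, real_inner_smul_right,
    mul_apply, transpose_apply, Finset.sum_mul]
  exact Finset.sum_congr rfl fun _ _ => Finset.sum_congr rfl fun _ _ => by
    rw [real_inner_comm]; ring

lemma det_gram_comp_equiv {ι κ : Type*} [Fintype ι] [DecidableEq ι] [Fintype κ] [DecidableEq κ]
    (e : ι ≃ κ) (f : κ → E) : (gram ℝ (f ∘ e)).det = (gram ℝ f).det :=
  det_submatrix_equiv_self e (gram ℝ f)

lemma det_gram_sum_elim_comm {ι κ : Type*} [Fintype ι] [DecidableEq ι] [Fintype κ]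
    [DecidableEq κ] (a : ι → E) (b : κ → E) :
    (gram ℝ (Sum.elim a b)).det = (gram ℝ (Sum.elim b a)).det := by
  rw [← det_gram_comp_equiv (Equiv.sumComm ι κ) (Sum.elim b a)]
  congr 3
  ext (i | j) <;> rfl

lemma det_gram_append {k m : ℕ} (v : Fin k → E) (w : Fin m → E) :
    (gram ℝ (Fin.append v w)).det = (gram ℝ (Sum.elim v w)).det := by
  rw [← Fin.append_comp_sumElim]
  exact (det_gram_comp_equiv finSumFinEquiv _).symm

lemma det_gram_sum_smul_of_orthonormal {ι : Type*} [Fintype ι] [DecidableEq ι]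
    (P : Matrix ι ι ℝ) {u : ι → E} (hu : Orthonormal ℝ u) :
    (gram ℝ (fun i => ∑ j, P i j • u j)).det = P.det ^ 2 := by
  rw [gram_sum_smul, gram_eq_one_iff_orthonormal.mpr hu, mul_one, det_mul, det_transpose, sq]

lemma det_gram_sum_elim_sum_smul {ι κ : Type*} [Fintype ι] [DecidableEq ι] [Fintype κ]
    [DecidableEq κ] (P : Matrix ι ι ℝ) (Q : Matrix κ κ ℝ) (u : ι → E) (x : κ → E) :
    (gram ℝ (Sum.elim (fun i => ∑ j, P i j • u j) (fun i => ∑ j, Q i j • x j))).det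
      = (P.det * Q.det) ^ 2 * (gram ℝ (Sum.elim u x)).det := by
  have hblock : Sum.elim (fun i => ∑ j, P i j • u j) (fun i => ∑ j, Q i j • x j)
      = fun i => ∑ j, fromBlocks P 0 0 Q i j • Sum.elim u x j := by
    ext (i | i) <;> simp [Fintype.sum_sum_type]
  rw [hblock, gram_sum_smul, det_mul, det_mul, det_transpose, det_fromBlocks_zero₁₂]
  ring

lemma tupleVol_sum_smul_of_orthonormal {n : ℕ} (R : Matrix (Fin n) (Fin n) ℝ) {y : Fin n → E}
    (hy : Orthonormal ℝ y) : tupleVol (fun i => ∑ j, R i j • y j) = |R.det| := by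
  rw [tupleVol, ← gram, det_gram_sum_smul_of_orthonormal R hy, Real.sqrt_sq_eq_abs]

/-- The ratio defining `subAngle` does not depend on the chosen bases. -/
lemma tupleVol_append_div_eq_of_orthonormal {k m : ℕ} {u : Fin k → E} {x : Fin m → E}
    (hu : Orthonormal ℝ u) (hx : Orthonormal ℝ x) {P : Matrix (Fin k) (Fin k) ℝ}
    {Q : Matrix (Fin m) (Fin m) ℝ} (hP : P.det ≠ 0) (hQ : Q.det ≠ 0) :
    tupleVol (Fin.append (fun i => ∑ j, P i j • u j) (fun i => ∑ j, Q i j • x j))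
        / (tupleVol (fun i => ∑ j, P i j • u j) * tupleVol (fun i => ∑ j, Q i j • x j))
      = √(gram ℝ (Sum.elim u x)).det := by
  rw [tupleVol_sum_smul_of_orthonormal P hu, tupleVol_sum_smul_of_orthonormal Q hx, tupleVol,
    ← gram, det_gram_append, det_gram_sum_elim_sum_smul, Real.sqrt_mul (sq_nonneg _),
    Real.sqrt_sq_eq_abs, abs_mul]
  field_simp

end Gram

section OrthonormalBasis

variable {E : Type*} [NormedAddCommGroup E] [InnerProductSpace ℝ E]
variable {ι κ : Type*} [Fintype ι] [Fintype κ]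

lemma Orthonormal.sum_inner_smul_eq_of_mem_span {u : ι → E} (hu : Orthonormal ℝ u) {x : E}
    (hx : x ∈ span ℝ (Set.range u)) : ∑ i, ⟪u i, x⟫_ℝ • u i = x := by
  obtain ⟨c, rfl⟩ := (mem_span_range_iff_exists_fun ℝ).mp hx
  simp only [hu.inner_right_fintype]

lemma OrthonormalBasis.span_range_coe {A : Submodule ℝ E} (a : OrthonormalBasis ι ℝ A) :
    span ℝ (Set.range fun i => (a i : E)) = A := by
  rw [show (Set.range fun i => (a i : E)) = A.subtype '' Set.range a from (Set.range_comp _ _),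
    span_image, ← a.coe_toBasis, a.toBasis.span_eq, Submodule.map_top, range_subtype]

lemma OrthonormalBasis.orthonormal_sum_elim_coe {A A' : Submodule ℝ E} (hAA' : A ⟂ A')
    (a : OrthonormalBasis ι ℝ A) (a' : OrthonormalBasis κ ℝ A') :
    Orthonormal ℝ (Sum.elim (fun i => (a i : E)) (fun j => (a' j : E))) := by
  classical
  have ha := orthonormal_iff_ite.mp a.orthonormal
  have ha' := orthonormal_iff_ite.mp a'.orthonormal
  rw [orthonormal_iff_ite]
  rintro (i | i) (j | j)
  · simpa [coe_inner] using ha i j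
  · simpa using hAA'.inner_eq (a i).2 (a' j).2
  · simpa using hAA'.symm.inner_eq (a' i).2 (a j).2
  · simpa [coe_inner] using ha' i j

/-- In the orthonormal basis `(a, a')` of `A ⊕ A'` the coordinate matrix of `(a, b)` is block
lower triangular with diagonal blocks `1` and the coordinate matrix of `b` in `a'`. -/
theorem det_gram_sum_elim_eq_det_inner_sq [DecidableEq ι] [DecidableEq κ]
    {A A' : Submodule ℝ E} (hAA' : A ⟂ A') (a : OrthonormalBasis ι ℝ A)
    (a' : OrthonormalBasis κ ℝ A') {b : κ → E} (hb : ∀ j, b j ∈ A ⊔ A') :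
    (gram ℝ (Sum.elim (fun i => (a i : E)) b)).det
      = (of fun i j => ⟪(a' j : E), b i⟫_ℝ).det ^ 2 := by
  set u := Sum.elim (fun i => (a i : E)) (fun j => (a' j : E))
  have hu : Orthonormal ℝ u := a.orthonormal_sum_elim_coe hAA' a'
  have hspan : span ℝ (Set.range u) = A ⊔ A' := by
    rw [Set.Sum.elim_range, span_union, a.span_range_coe, a'.span_range_coe]
  set t := Sum.elim (fun i => (a i : E)) b
  set M : Matrix (ι ⊕ κ) (ι ⊕ κ) ℝ := of fun i c => ⟪u c, t i⟫_ℝ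
  have ht : t = fun i => ∑ c, M i c • u c := by
    ext i
    refine (hu.sum_inner_smul_eq_of_mem_span ?_).symm
    rw [hspan]
    rcases i with i | j
    · exact mem_sup_left (a i).2
    · exact hb j
  have hblocks : M = fromBlocks 1 0 (of fun j i => ⟪(a i : E), b j⟫_ℝ)
      (of fun i j => ⟪(a' j : E), b i⟫_ℝ) := by
    have hu' := orthonormal_iff_ite.mp hu
    ext (i | i) (c | c)
    · simpa [M, t, u, one_apply, eq_comm] using hu' (Sum.inl c) (Sum.inl i)
    · simpa [M, t, u] using hu' (Sum.inr c) (Sum.inl i)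
    · rfl
    · rfl
  rw [ht, det_gram_sum_smul_of_orthonormal _ hu, hblocks, det_fromBlocks_zero₁₂, det_one, one_mul]

end OrthonormalBasis

namespace Submodule

variable {E : Type*} [NormedAddCommGroup E] [InnerProductSpace ℝ E]

lemma inf_orthogonal_sup_orthogonal_inf_eq {X Y Z : Submodule ℝ E} [X.HasOrthogonalProjection]
    (hZX : Z ≤ X) (hXY : X ≤ Y) : X ⊓ Zᗮ ⊔ Xᗮ ⊓ Y = Y ⊓ Zᗮ := by
  conv_rhs => rw [← sup_orthogonal_inf_of_hasOrthogonalProjection hXY, sup_comm]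
  rw [sup_inf_assoc_of_le X (inf_le_left.trans (orthogonal_le hZX)), sup_comm]

variable [FiniteDimensional ℝ E] (V W : Submodule ℝ E)

lemma orthogonal_le_or_le_iff : Vᗮ ≤ Wᗮ ∨ Wᗮ ≤ Vᗮ ↔ V ≤ W ∨ W ≤ V := by
  rw [orthogonal_le_orthogonal_iff, orthogonal_le_orthogonal_iff, or_comm]

lemma inf_orthogonal_inf_le_sup :
    W ⊓ (V ⊓ W)ᗮ ≤ V ⊓ (V ⊓ W)ᗮ ⊔ Vᗮ ⊓ (Vᗮ ⊓ Wᗮ)ᗮ := by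
  rw [inf_orthogonal V W, orthogonal_orthogonal,
    inf_orthogonal_sup_orthogonal_inf_eq inf_le_left le_sup_left]
  exact inf_le_inf_right _ le_sup_right

lemma finrank_orthogonal_inf_orthogonal_eq :
    finrank ℝ ↥(Vᗮ ⊓ (Vᗮ ⊓ Wᗮ)ᗮ) = finrank ℝ ↥(W ⊓ (V ⊓ W)ᗮ) := by
  rw [inf_orthogonal V W, orthogonal_orthogonal, inf_comm W]
  have := finrank_sup_add_finrank_inf_eq V W
  have := finrank_add_inf_finrank_orthogonal (le_sup_left : V ≤ V ⊔ W)
  have := finrank_add_inf_finrank_orthogonal (inf_le_right : V ⊓ W ≤ W)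
  omega

end Submodule

section SubAngle

variable {E : Type*} [NormedAddCommGroup E] [InnerProductSpace ℝ E]

lemma OrthonormalBasis.coe_basis_eq_sum {ι : Type*} [Fintype ι]
    {S : Submodule ℝ E} (o : OrthonormalBasis ι ℝ S) (e : Basis ι ℝ S) :
    (fun i => (e i : E)) = fun i => ∑ j, (o.toBasis.toMatrix e)ᵀ i j • (o j : E) := by
  ext i
  rw [← o.toBasis.sum_toMatrix_smul_self e i, coe_sum]
  simp only [transpose_apply, coe_smul, o.coe_toBasis]

lemma OrthonormalBasis.det_transpose_toMatrix_ne_zero {ι : Type*} [Fintype ι] [DecidableEq ι]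
    {S : Submodule ℝ E} (o : OrthonormalBasis ι ℝ S) (e : Basis ι ℝ S) :
    (o.toBasis.toMatrix e)ᵀ.det ≠ 0 := by
  rw [det_transpose, ← Basis.det_apply]
  exact (o.toBasis.isUnit_det e).ne_zero

variable [FiniteDimensional ℝ E] {V W : Submodule ℝ E}

lemma subAngle_of_le_or_le (h : V ≤ W ∨ W ≤ V) : subAngle V W = 1 := by
  rw [subAngle, if_pos h]

lemma subAngle_eq_sqrt_det_gram_of_fin (h : ¬(V ≤ W ∨ W ≤ V))
    (a : OrthonormalBasis (Fin (finrank ℝ ↥(V ⊓ (V ⊓ W)ᗮ))) ℝ ↥(V ⊓ (V ⊓ W)ᗮ))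
    (b : OrthonormalBasis (Fin (finrank ℝ ↥(W ⊓ (V ⊓ W)ᗮ))) ℝ ↥(W ⊓ (V ⊓ W)ᗮ)) :
    subAngle V W = √(gram ℝ (Sum.elim (fun i => (a i : E)) (fun j => (b j : E)))).det := by
  rw [subAngle, if_neg h]
  dsimp only
  rw [a.coe_basis_eq_sum, b.coe_basis_eq_sum]
  refine tupleVol_append_div_eq_of_orthonormal ?_ ?_ ?_ ?_
  · exact a.orthonormal.comp_linearIsometry (V ⊓ (V ⊓ W)ᗮ).subtypeₗᵢ
  · exact b.orthonormal.comp_linearIsometry (W ⊓ (V ⊓ W)ᗮ).subtypeₗᵢ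
  · exact a.det_transpose_toMatrix_ne_zero _
  · exact b.det_transpose_toMatrix_ne_zero _

theorem subAngle_eq_sqrt_det_gram {ι κ : Type*} [Fintype ι] [DecidableEq ι] [Fintype κ]
    [DecidableEq κ] (h : ¬(V ≤ W ∨ W ≤ V)) (a : OrthonormalBasis ι ℝ ↥(V ⊓ (V ⊓ W)ᗮ))
    (b : OrthonormalBasis κ ℝ ↥(W ⊓ (V ⊓ W)ᗮ)) :
    subAngle V W = √(gram ℝ (Sum.elim (fun i => (a i : E)) (fun j => (b j : E)))).det := by
  let ea := Fintype.equivFinOfCardEq (finrank_eq_card_basis a.toBasis).symm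
  let eb := Fintype.equivFinOfCardEq (finrank_eq_card_basis b.toBasis).symm
  rw [subAngle_eq_sqrt_det_gram_of_fin h (a.reindex ea) (b.reindex eb),
    ← det_gram_comp_equiv (Equiv.sumCongr ea eb)]
  congr 4
  ext (i | j) <;> simp

end SubAngle

/-- The angle between the orthogonal complements equals the angle
between the subspaces: `σ(Vᗮ, Wᗮ) = σ(V, W)`. -/
theorem stmt1 {E : Type*} [NormedAddCommGroup E] [InnerProductSpace ℝ E]
    [FiniteDimensional ℝ E] (V W : Submodule ℝ E) :
    subAngle Vᗮ Wᗮ = subAngle V W := by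
  by_cases h : V ≤ W ∨ W ≤ V
  · rw [subAngle_of_le_or_le h, subAngle_of_le_or_le ((V.orthogonal_le_or_le_iff W).mpr h)]
  have h' : ¬(Vᗮ ≤ Wᗮ ∨ Wᗮ ≤ Vᗮ) := by rwa [orthogonal_le_or_le_iff]
  let v := stdOrthonormalBasis ℝ ↥(V ⊓ (V ⊓ W)ᗮ)
  let w := stdOrthonormalBasis ℝ ↥(W ⊓ (V ⊓ W)ᗮ)
  have hdimW : finrank ℝ ↥(Wᗮ ⊓ (Vᗮ ⊓ Wᗮ)ᗮ) = finrank ℝ ↥(V ⊓ (V ⊓ W)ᗮ) := by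
    rw [inf_comm Vᗮ Wᗮ, inf_comm V W]
    exact W.finrank_orthogonal_inf_orthogonal_eq V
  have hle : Vᗮ ⊓ (Vᗮ ⊓ Wᗮ)ᗮ ≤ Wᗮ ⊓ (Vᗮ ⊓ Wᗮ)ᗮ ⊔ W ⊓ (V ⊓ W)ᗮ := by
    rw [inf_comm Vᗮ Wᗮ, inf_comm V W]
    simpa only [orthogonal_orthogonal] using Wᗮ.inf_orthogonal_inf_le_sup Vᗮ
  let v₂ := (stdOrthonormalBasis ℝ ↥(Vᗮ ⊓ (Vᗮ ⊓ Wᗮ)ᗮ)).reindex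
    (finCongr (V.finrank_orthogonal_inf_orthogonal_eq W))
  let w₂ := (stdOrthonormalBasis ℝ ↥(Wᗮ ⊓ (Vᗮ ⊓ Wᗮ)ᗮ)).reindex (finCongr hdimW)
  rw [subAngle_eq_sqrt_det_gram h v w, subAngle_eq_sqrt_det_gram h' v₂ w₂, det_gram_sum_elim_comm,
    det_gram_sum_elim_eq_det_inner_sq
      ((isOrtho_orthogonal_left W).mono inf_le_left inf_le_left) w₂ w (fun i => hle (v₂ i).2),
    det_gram_sum_elim_eq_det_inner_sq
      ((isOrtho_orthogonal_right V).mono inf_le_left inf_le_left) v v₂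
      (fun j => V.inf_orthogonal_inf_le_sup W (w j).2), ← det_transpose]
  congr 3
  ext
  exact real_inner_comm _ _
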